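/- arXiv:1702.04795 — 2 statements merged into one kernel-verified Lean document; each statement's English description precedes it below -/
import Mathlib

section
/- Let R=(r_n) be a regular sequence, let f be an operator on R, and let z ∈ ℤ with z ≠ 0. Then the set {n ∈ ℕ : f(n) = z} is finite. -/
open Filter

/-- `r` satisfies a linear recurrence relation over `ℤ` whose characteristic
polynomial `X^k - ∑_{i<k} cᵢ X^i` is the minimal polynomial of `θ` over `ℚ`. -/
def SatisfiesRecurrenceMinpoly (r : ℕ → ℕ) (θ : ℝ) : Prop :=
  ∃ k : ℕ, 0 < k ∧ ∃ c : ℕ → ℤ,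
    (∀ n : ℕ, (r (n + k) : ℤ) = ∑ i ∈ Finset.range k, c i * r (n + i)) ∧
    (Polynomial.X ^ k - ∑ i ∈ Finset.range k, Polynomial.C (c i : ℚ) * Polynomial.X ^ i)
      = minpoly ℚ θ

/-- A strictly increasing sequence `r` of naturals is regular if the ratios
`r (n+1) / r n` tend to `∞` or converge to some real `θ > 1` which, if
algebraic, is such that `r` satisfies a linear recurrence whose characteristic
polynomial is the minimal polynomial of `θ`. -/
def IsRegularSequence (r : ℕ → ℕ) : Prop :=
  StrictMono r ∧
    (Tendsto (fun n => (r (n + 1) : ℝ) / r n) atTop atTop ∨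
      ∃ θ : ℝ, 1 < θ ∧ Tendsto (fun n => (r (n + 1) : ℝ) / r n) atTop (nhds θ) ∧
        (IsAlgebraic ℚ θ → SatisfiesRecurrenceMinpoly r θ))

/-! Write `F n = ∑ aᵢ r (n + i)`. If `r (n+1) / r n → ∞`, then `F n / r (n + d) → a_d ≠ 0`;
if `r (n+1) / r n → θ`, then `F n / r n → P(θ)` with `P = ∑ aᵢ Xⁱ`. Whenever the limit is
nonzero, `|F n| → ∞`, so `F n = z` has finitely many solutions. In the remaining case `P(θ) = 0`,
so `θ` is algebraic and its minimal polynomial, the characteristic polynomial of the recurrence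
of `r`, divides `P`; hence `F` vanishes identically, and `z ≠ 0` is never attained. -/

open Finset Polynomial Topology

def seqOperator (r : ℕ → ℕ) (d : ℕ) (a : ℕ → ℤ) (n : ℕ) : ℤ :=
  ∑ i ∈ range (d + 1), a i * (r (n + i) : ℤ)

theorem finite_setOf_eq_of_tendsto_div {f : ℕ → ℤ} {g : ℕ → ℝ} {L : ℝ} (hL : L ≠ 0)
    (hg : Tendsto g atTop atTop) (hfg : Tendsto (fun n => (f n : ℝ) / g n) atTop (𝓝 L))
    (z : ℤ) : {n | f n = z}.Finite := by
  have habs : Tendsto (fun n => |(f n : ℝ)|) atTop atTop := by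
    refine (hfg.abs.pos_mul_atTop (abs_pos.2 hL) hg).congr' ?_
    filter_upwards [hg.eventually_gt_atTop 0] with n hn
    rw [abs_div, abs_of_pos hn, div_mul_cancel₀ _ hn.ne']
  have hne : ∀ᶠ n in atTop, f n ≠ z := by
    filter_upwards [habs.eventually_gt_atTop |(z : ℝ)|] with n hn hfz
    exact hn.ne (by rw [hfz])
  simpa [← Nat.cofinite_eq_atTop] using hne

theorem tendsto_seqOperator_div {r : ℕ → ℕ} {g : ℕ → ℝ} {c : ℕ → ℝ} (d : ℕ) (a : ℕ → ℤ)
    (h : ∀ i ∈ range (d + 1), Tendsto (fun n => (r (n + i) : ℝ) / g n) atTop (𝓝 (c i))) :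
    Tendsto (fun n => (seqOperator r d a n : ℝ) / g n) atTop
      (𝓝 (∑ i ∈ range (d + 1), a i * c i)) := by
  refine (tendsto_finsetSum _ fun i hi => (h i hi).const_mul (a i : ℝ)).congr fun n => ?_
  simp only [seqOperator, Int.cast_sum, Int.cast_mul, Int.cast_natCast, sum_div, mul_div_assoc]

theorem tendsto_add_div_of_tendsto_ratio {u : ℕ → ℝ} {θ : ℝ} (hu : ∀ᶠ n in atTop, u n ≠ 0)
    (h : Tendsto (fun n => u (n + 1) / u n) atTop (𝓝 θ)) (i : ℕ) :
    Tendsto (fun n => u (n + i) / u n) atTop (𝓝 (θ ^ i)) := by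
  have hu' : ∀ᶠ n in atTop, ∀ j, u (n + j) ≠ 0 := by
    obtain ⟨N, hN⟩ := eventually_atTop.1 hu
    exact eventually_atTop.2 ⟨N, fun n hn j => hN _ (by omega)⟩
  induction i with
  | zero =>
    refine tendsto_const_nhds.congr' ?_
    filter_upwards [hu] with n hn
    simp [hn]
  | succ i ih =>
    rw [pow_succ']
    refine (((tendsto_add_atTop_iff_nat i).2 h).mul ih).congr' ?_
    filter_upwards [hu'] with n hn
    rw [← add_assoc, div_mul_div_cancel₀ (by simpa using hn i)]

theorem tendsto_add_div_add_of_ratio_tendsto_atTop {u : ℕ → ℝ} (hmono : Monotone u)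
    (hpos : ∀ᶠ n in atTop, 0 < u n) (h : Tendsto (fun n => u (n + 1) / u n) atTop atTop)
    {i j : ℕ} (hij : i < j) : Tendsto (fun n => u (n + i) / u (n + j)) atTop (𝓝 0) := by
  have hinv : Tendsto (fun n => u (n + i) / u (n + i + 1)) atTop (𝓝 0) := by
    refine ((tendsto_add_atTop_iff_nat i).2 h).inv_tendsto_atTop.congr fun n => ?_
    rw [Pi.inv_apply, inv_div]
  refine squeeze_zero' ?_ ?_ hinv
  · filter_upwards [hpos] with n hn
    exact div_nonneg (hn.le.trans (hmono (by omega))) (hn.le.trans (hmono (by omega)))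
  · filter_upwards [hpos] with n hn
    exact div_le_div_of_nonneg_left (hn.le.trans (hmono (by omega)))
      (hn.trans_le (hmono (by omega))) (hmono (by omega))

def seqShift (R : Type*) [CommSemiring R] : Module.End R (ℕ → R) :=
  LinearMap.funLeft R R (· + 1)

theorem seqShift_pow_apply {R : Type*} [CommSemiring R] (i : ℕ) (s : ℕ → R) (n : ℕ) :
    (seqShift R ^ i) s n = s (n + i) := by
  induction i generalizing n with
  | zero => rfl
  | succ i ih =>
    rw [pow_succ', Module.End.mul_apply]
    exact (ih (n + 1)).trans (by rw [add_assoc, add_comm 1])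

theorem aeval_seqShift_sum_C_mul_X_pow_apply {R : Type*} [CommSemiring R] (b : ℕ → R)
    (N : ℕ) (s : ℕ → R) (n : ℕ) :
    aeval (seqShift R) (∑ i ∈ range N, C (b i) * X ^ i) s n = ∑ i ∈ range N, b i * s (n + i) := by
  simp [Module.algebraMap_end_apply, seqShift_pow_apply]

theorem SatisfiesRecurrenceMinpoly.aeval_seqShift_eq_zero {r : ℕ → ℕ} {θ : ℝ}
    (h : SatisfiesRecurrenceMinpoly r θ) {P : ℚ[X]} (hP : aeval θ P = 0) :
    aeval (seqShift ℚ) P (fun n => (r n : ℚ)) = 0 := by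
  obtain ⟨k, -, c, hrec, hmin⟩ := h
  have hm : aeval (seqShift ℚ) (minpoly ℚ θ) (fun n => (r n : ℚ)) = 0 := by
    ext n
    rw [← hmin, map_sub, LinearMap.sub_apply, Pi.sub_apply, aeval_seqShift_sum_C_mul_X_pow_apply,
      map_pow, aeval_X, seqShift_pow_apply, Pi.zero_apply, sub_eq_zero]
    exact_mod_cast hrec n
  obtain ⟨Q, rfl⟩ := minpoly.dvd ℚ θ hP
  rw [mul_comm, map_mul, Module.End.mul_apply, hm, map_zero]

theorem seqOperator_eq_zero_of_sum_eq_zero {r : ℕ → ℕ} {θ : ℝ}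
    (h : SatisfiesRecurrenceMinpoly r θ) {d : ℕ} {a : ℕ → ℤ}
    (hθ : ∑ i ∈ range (d + 1), (a i : ℝ) * θ ^ i = 0) (n : ℕ) : seqOperator r d a n = 0 := by
  have hP := h.aeval_seqShift_eq_zero (P := ∑ i ∈ range (d + 1), C (a i : ℚ) * X ^ i)
    (by simpa using hθ)
  have := congrFun hP n
  rw [aeval_seqShift_sum_C_mul_X_pow_apply, Pi.zero_apply] at this
  exact_mod_cast this

theorem isAlgebraic_of_sum_eq_zero {θ : ℝ} {d : ℕ} {a : ℕ → ℤ} (had : a d ≠ 0)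
    (hθ : ∑ i ∈ range (d + 1), (a i : ℝ) * θ ^ i = 0) : IsAlgebraic ℚ θ := by
  refine ⟨∑ i ∈ range (d + 1), C (a i : ℚ) * X ^ i, fun h0 => had ?_, by simpa using hθ⟩
  have := congrArg (coeff · d) h0
  simpa [finsetSum_coeff, coeff_C_mul, coeff_X_pow] using this

theorem tendsto_seqOperator_div_of_ratio_tendsto_atTop {r : ℕ → ℕ} (hmono : StrictMono r)
    (h : Tendsto (fun n => (r (n + 1) : ℝ) / r n) atTop atTop) (d : ℕ) (a : ℕ → ℤ) :
    Tendsto (fun n => (seqOperator r d a n : ℝ) / r (n + d)) atTop (𝓝 (a d)) := by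
  have hpos : ∀ᶠ n in atTop, (0 : ℝ) < r n :=
    (tendsto_natCast_atTop_atTop.comp hmono.tendsto_atTop).eventually_gt_atTop 0
  have hlim : ∀ i ∈ range (d + 1), Tendsto (fun n => (r (n + i) : ℝ) / r (n + d)) atTop
      (𝓝 (if i = d then 1 else 0)) := by
    intro i hi
    rcases (Nat.lt_succ_iff.1 (mem_range.1 hi)).lt_or_eq with hid | rfl
    · simpa [hid.ne] using tendsto_add_div_add_of_ratio_tendsto_atTop
        (Nat.mono_cast.comp hmono.monotone) hpos h hid
    · refine tendsto_const_nhds.congr' ?_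
      filter_upwards [(tendsto_add_atTop_nat i).eventually hpos] with n hn
      simp [hn.ne']
  simpa using tendsto_seqOperator_div d a hlim

/-- for a regular sequence `r`, an operator `f` and a nonzero
integer `z`, the equation `f(n) = z` has finitely many solutions. -/
theorem operator_fibers_finite_of_regular
    (r : ℕ → ℕ) (hr : IsRegularSequence r)
    (d : ℕ) (a : ℕ → ℤ) (had : a d ≠ 0) (z : ℤ) (hz : z ≠ 0) :
    {n : ℕ | (∑ i ∈ Finset.range (d + 1), a i * (r (n + i) : ℤ)) = z}.Finite := by
  change {n | seqOperator r d a n = z}.Finite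
  obtain ⟨hmono, hratio⟩ := hr
  have hr_top : Tendsto (fun n => (r n : ℝ)) atTop atTop :=
    tendsto_natCast_atTop_atTop.comp hmono.tendsto_atTop
  rcases hratio with hinf | ⟨θ, -, hθ, halg⟩
  · exact finite_setOf_eq_of_tendsto_div (Int.cast_ne_zero.2 had)
      (hr_top.comp (tendsto_add_atTop_nat d))
      (tendsto_seqOperator_div_of_ratio_tendsto_atTop hmono hinf d a) z
  by_cases hP : ∑ i ∈ range (d + 1), (a i : ℝ) * θ ^ i = 0
  · have hzero := seqOperator_eq_zero_of_sum_eq_zero (halg (isAlgebraic_of_sum_eq_zero had hP)) hP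
    simp [hzero, hz.symm]
  · have hne : ∀ᶠ n in atTop, (r n : ℝ) ≠ 0 := (hr_top.eventually_gt_atTop 0).mono fun _ h => h.ne'
    exact finite_setOf_eq_of_tendsto_div hP hr_top
      (tendsto_seqOperator_div d a fun i _ => tendsto_add_div_of_tendsto_ratio hne hθ i) z
end

section
/- Let R=(r_n) and R'=(r'_n) be regular sequences with r_{n+1}/r_n → θ and r'_{n+1}/r'_n → θ', where θ, θ' are real numbers with 1 < θ ≤ θ'. Set r''_n = r_n + r'_n. Then for all integers a_0,…,a_d with a_d ≠ 0, the set {n ∈ ℕ : a_0 r''_n + a_1 r''_{n+1} + ⋯ + a_d r''_{n+d} = 0} is either finite or cofinite in ℕ. -/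
open Filter

/-!
Write `P(x) = a₀ + a₁x + ⋯ + a_d xᵈ` and `(L s)(n) = a₀ s(n) + ⋯ + a_d s(n + d)`. For a regular `r`
with ratio limit `θ`: if `P(θ) = 0`, then `θ` is algebraic, so `r` satisfies the recurrence whose
characteristic polynomial is the minimal polynomial of `θ`; that polynomial divides `P`, hence
`L r = 0` identically. If `P(θ) ≠ 0`, then `(L r)(n) / r(n) → P(θ)`, so `L r` is eventually nonzero.

For `r'' = r + r'`: if `P(θ') = 0`, then `L r'' = L r`. Otherwise `L r''` is eventually nonzero,
because `(L r'')(n) / r''(n) → P(θ)` when `θ = θ'` (the ratios of `r''` are mediants of those of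
`r` and `r'`), and `(L r'')(n) / r'(n) → P(θ')` when `θ < θ'` (then `r(n) / r'(n) → 0` by the
ratio test).
-/

open Topology Polynomial

namespace LinearMap
variable {R M : Type*} [CommSemiring R] [AddCommMonoid M] [Module R M]

theorem funLeft_add_one_pow_apply (s : ℕ → M) (i n : ℕ) :
    (funLeft R M (· + 1) ^ i) s n = s (n + i) := by
  induction i generalizing n with
  | zero => rfl
  | succ i ih =>
    rw [pow_succ', Module.End.mul_apply, funLeft_apply, ih, add_right_comm, add_assoc]

theorem aeval_funLeft_add_one_sum_apply (b : ℕ → R) (m : ℕ) (s : ℕ → M) (n : ℕ) :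
    aeval (funLeft R M (· + 1)) (∑ i ∈ Finset.range m, C (b i) * X ^ i) s n
      = ∑ i ∈ Finset.range m, b i • s (n + i) := by
  simp [Finset.sum_apply, funLeft_add_one_pow_apply]

end LinearMap

theorem Polynomial.aeval_apply_eq_zero_of_dvd {R M : Type*} [CommSemiring R] [AddCommMonoid M]
    [Module R M] {f : Module.End R M} {p q : R[X]} {x : M} (hp : aeval f p x = 0) (hpq : p ∣ q) :
    aeval f q x = 0 := by
  obtain ⟨q, rfl⟩ := hpq
  rw [mul_comm, map_mul, Module.End.mul_apply, hp, map_zero]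

theorem SatisfiesRecurrenceMinpoly.sum_mul_eq_zero {r : ℕ → ℕ} {θ : ℝ}
    (hrec : SatisfiesRecurrenceMinpoly r θ) {b : ℕ → ℤ} {m : ℕ}
    (hroot : ∑ i ∈ Finset.range m, (b i : ℝ) * θ ^ i = 0) (n : ℕ) :
    ∑ i ∈ Finset.range m, b i * (r (n + i) : ℤ) = 0 := by
  obtain ⟨k, -, c, hc, hmin⟩ := hrec
  let shift := LinearMap.funLeft ℚ ℚ (· + 1 : ℕ → ℕ)
  let s : ℕ → ℚ := fun n => r n
  have hmin_s : aeval shift (minpoly ℚ θ) s = 0 := by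
    ext n
    rw [← hmin, map_sub, LinearMap.sub_apply, Pi.sub_apply,
      LinearMap.aeval_funLeft_add_one_sum_apply, aeval_X_pow,
      LinearMap.funLeft_add_one_pow_apply]
    simpa [s, sub_eq_zero] using congrArg (Int.cast : ℤ → ℚ) (hc n)
  have hdvd : minpoly ℚ θ ∣ ∑ i ∈ Finset.range m, C (b i : ℚ) * X ^ i :=
    minpoly.dvd ℚ θ (by simpa using hroot)
  have := congrFun (aeval_apply_eq_zero_of_dvd hmin_s hdvd) n
  rw [LinearMap.aeval_funLeft_add_one_sum_apply, Pi.zero_apply] at this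
  simp only [s, smul_eq_mul] at this
  exact_mod_cast this

theorem isAlgebraic_of_sum_mul_pow_eq_zero {A : Type*} [Ring A] [Algebra ℚ A] {a : ℕ → ℤ}
    {d : ℕ} (had : a d ≠ 0) {x : A} (hroot : ∑ i ∈ Finset.range (d + 1), (a i : A) * x ^ i = 0) :
    IsAlgebraic ℚ x := by
  refine ⟨∑ i ∈ Finset.range (d + 1), C (a i : ℚ) * X ^ i, fun h => had ?_, by simpa using hroot⟩
  simpa using congrArg (coeff · d) h

theorem IsRegularSequence.satisfiesRecurrenceMinpoly {r : ℕ → ℕ} (hr : IsRegularSequence r)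
    {θ : ℝ} (h : Tendsto (fun n => (r (n + 1) : ℝ) / r n) atTop (𝓝 θ)) (hθ : IsAlgebraic ℚ θ) :
    SatisfiesRecurrenceMinpoly r θ := by
  obtain ⟨-, htop | ⟨θ₀, -, h₀, hrec⟩⟩ := hr
  · exact absurd htop (not_tendsto_atTop_of_tendsto_nhds h)
  · exact tendsto_nhds_unique h₀ h ▸ hrec (tendsto_nhds_unique h₀ h ▸ hθ)

theorem StrictMono.eventually_cast_pos {r : ℕ → ℕ} (hr : StrictMono r) :
    ∀ᶠ n in atTop, (0 : ℝ) < r n :=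
  (eventually_gt_atTop 0).mono fun _ hn => Nat.cast_pos.2 (hn.trans_le hr.le_apply)

section Mediant

variable {α : Type*} [Field α] [LinearOrder α] [IsStrictOrderedRing α] {a b c d : α}

theorem min_le_add_div_add (hb : 0 < b) (hd : 0 < d) :
    min (a / b) (c / d) ≤ (a + c) / (b + d) := by
  rw [le_div_iff₀ (add_pos hb hd), mul_add]
  exact add_le_add ((le_div_iff₀ hb).1 (min_le_left _ _)) ((le_div_iff₀ hd).1 (min_le_right _ _))

theorem add_div_add_le_max (hb : 0 < b) (hd : 0 < d) :
    (a + c) / (b + d) ≤ max (a / b) (c / d) := by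
  rw [div_le_iff₀ (add_pos hb hd), mul_add]
  exact add_le_add ((div_le_iff₀ hb).1 (le_max_left _ _)) ((div_le_iff₀ hd).1 (le_max_right _ _))

end Mediant

section RatioLimits

variable {u v : ℕ → ℝ} {θ θ' : ℝ}

theorem tendsto_add_div_of_tendsto_succ_div (hu : ∀ᶠ n in atTop, u n ≠ 0)
    (h : Tendsto (fun n => u (n + 1) / u n) atTop (𝓝 θ)) (i : ℕ) :
    Tendsto (fun n => u (n + i) / u n) atTop (𝓝 (θ ^ i)) := by
  induction i with
  | zero =>
    refine tendsto_const_nhds.congr' ?_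
    filter_upwards [hu] with n hn
    rw [add_zero, div_self hn, pow_zero]
  | succ i ih =>
    refine (((tendsto_add_atTop_iff_nat 1).2 ih).mul h).congr' ?_
    filter_upwards [(tendsto_add_atTop_nat 1).eventually hu] with n hn1
    rw [div_mul_div_cancel₀ hn1, add_right_comm, add_assoc]

theorem tendsto_sum_mul_div_of_tendsto_succ_div (hu : ∀ᶠ n in atTop, u n ≠ 0)
    (h : Tendsto (fun n => u (n + 1) / u n) atTop (𝓝 θ)) (b : ℕ → ℝ) (m : ℕ) :
    Tendsto (fun n => (∑ i ∈ Finset.range m, b i * u (n + i)) / u n) atTop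
      (𝓝 (∑ i ∈ Finset.range m, b i * θ ^ i)) := by
  simp only [Finset.sum_div, mul_div_assoc]
  exact tendsto_finsetSum _ fun i _ => (tendsto_add_div_of_tendsto_succ_div hu h i).const_mul _

theorem tendsto_div_zero_of_tendsto_succ_div (hu : ∀ᶠ n in atTop, u n ≠ 0)
    (hv : ∀ᶠ n in atTop, v n ≠ 0) (h : Tendsto (fun n => u (n + 1) / u n) atTop (𝓝 θ))
    (h' : Tendsto (fun n => v (n + 1) / v n) atTop (𝓝 θ')) (hθ : |θ| < |θ'|) :
    Tendsto (fun n => u n / v n) atTop (𝓝 0) := by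
  have hθ' : θ' ≠ 0 := abs_pos.1 ((abs_nonneg θ).trans_lt hθ)
  have hratio : Tendsto (fun n => ‖u (n + 1) / v (n + 1)‖ / ‖u n / v n‖) atTop
      (𝓝 |θ / θ'|) := by
    refine (h.div h' hθ').abs.congr fun n => ?_
    simp only [Pi.div_apply, Real.norm_eq_abs, abs_div]
    exact div_div_div_comm _ _ _ _
  refine (summable_of_ratio_test_tendsto_lt_one (by rwa [abs_div, div_lt_one (abs_pos.2 hθ')]) ?_
    hratio).tendsto_atTop_zero
  filter_upwards [hu, hv] with n hun hvn
  exact div_ne_zero hun hvn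

theorem tendsto_add_succ_div_add (hu : ∀ᶠ n in atTop, 0 < u n) (hv : ∀ᶠ n in atTop, 0 < v n)
    (h : Tendsto (fun n => u (n + 1) / u n) atTop (𝓝 θ))
    (h' : Tendsto (fun n => v (n + 1) / v n) atTop (𝓝 θ)) :
    Tendsto (fun n => (u (n + 1) + v (n + 1)) / (u n + v n)) atTop (𝓝 θ) := by
  refine tendsto_of_tendsto_of_tendsto_of_le_of_le' (by simpa using h.min h')
    (by simpa using h.max h') ?_ ?_
  all_goals filter_upwards [hu, hv] with n hun hvn
  · exact min_le_add_div_add hun hvn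
  · exact add_div_add_le_max hun hvn

theorem tendsto_sum_mul_add_div_of_abs_lt (hu : ∀ᶠ n in atTop, u n ≠ 0)
    (hv : ∀ᶠ n in atTop, v n ≠ 0) (h : Tendsto (fun n => u (n + 1) / u n) atTop (𝓝 θ))
    (h' : Tendsto (fun n => v (n + 1) / v n) atTop (𝓝 θ')) (hθ : |θ| < |θ'|) (b : ℕ → ℝ)
    (m : ℕ) :
    Tendsto (fun n => (∑ i ∈ Finset.range m, b i * (u (n + i) + v (n + i))) / v n) atTop
      (𝓝 (∑ i ∈ Finset.range m, b i * θ' ^ i)) := by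
  have hlim := ((tendsto_sum_mul_div_of_tendsto_succ_div hu h b m).mul
    (tendsto_div_zero_of_tendsto_succ_div hu hv h h' hθ)).add
    (tendsto_sum_mul_div_of_tendsto_succ_div hv h' b m)
  rw [mul_zero, zero_add] at hlim
  refine hlim.congr' ?_
  filter_upwards [hu] with n hn
  rw [div_mul_div_cancel₀ hn, ← add_div, ← Finset.sum_add_distrib]
  simp only [mul_add]

end RatioLimits

theorem finite_setOf_eq_zero_or_finite_setOf_ne_zero {M : Type*} [Zero M] {f : ℕ → M}
    (h : (∀ᶠ n in atTop, f n ≠ 0) ∨ ∀ n, f n = 0) :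
    {n | f n = 0}.Finite ∨ {n | f n ≠ 0}.Finite := by
  refine h.imp (fun h => ?_) fun h => by simp [h]
  rw [← Nat.cofinite_eq_atTop] at h
  simpa using h

theorem eventually_ne_zero_of_tendsto_div {α : Type*} {l : Filter α} {f g : α → ℝ} {L : ℝ}
    (hL : L ≠ 0) (h : Tendsto (fun n => f n / g n) l (𝓝 L)) : ∀ᶠ n in l, f n ≠ 0 :=
  (h.eventually_ne hL).mono fun _ hn h0 => hn (by rw [h0, zero_div])

theorem IsRegularSequence.eventually_ne_zero_or_forall_eq_zero {r : ℕ → ℕ}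
    (hr : IsRegularSequence r) {θ : ℝ} (h : Tendsto (fun n => (r (n + 1) : ℝ) / r n) atTop (𝓝 θ))
    {a : ℕ → ℤ} {d : ℕ} (had : a d ≠ 0) :
    (∀ᶠ n in atTop, ∑ i ∈ Finset.range (d + 1), a i * (r (n + i) : ℤ) ≠ 0) ∨
      ∀ n, ∑ i ∈ Finset.range (d + 1), a i * (r (n + i) : ℤ) = 0 := by
  by_cases hroot : ∑ i ∈ Finset.range (d + 1), (a i : ℝ) * θ ^ i = 0
  · exact .inr ((hr.satisfiesRecurrenceMinpoly h
      (isAlgebraic_of_sum_mul_pow_eq_zero had hroot)).sum_mul_eq_zero hroot)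
  · refine .inl ?_
    have hlim := tendsto_sum_mul_div_of_tendsto_succ_div
      (hr.1.eventually_cast_pos.mono fun _ => ne_of_gt) h (fun i => (a i : ℝ)) (d + 1)
    filter_upwards [eventually_ne_zero_of_tendsto_div hroot hlim] with n hn
    exact_mod_cast hn

/-- let `r`, `r'` be regular sequences with ratio limits
`1 < θ ≤ θ'`, and set `r''_n = r_n + r'_n`. Then for all integers
`a₀, …, a_d` with `a_d ≠ 0`, the set
`{n | a₀ r''_n + ⋯ + a_d r''_{n+d} = 0}` is finite or cofinite in `ℕ`. -/
theorem operator_zeros_finite_or_cofinite_of_sum_of_regular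
    (r r' : ℕ → ℕ) (hr : IsRegularSequence r) (hr' : IsRegularSequence r')
    (θ θ' : ℝ) (hθ : 1 < θ) (hθθ' : θ ≤ θ')
    (h1 : Tendsto (fun n => (r (n + 1) : ℝ) / r n) atTop (nhds θ))
    (h2 : Tendsto (fun n => (r' (n + 1) : ℝ) / r' n) atTop (nhds θ'))
    (d : ℕ) (a : ℕ → ℤ) (had : a d ≠ 0) :
    {n : ℕ | (∑ i ∈ Finset.range (d + 1),
        a i * ((r (n + i) : ℤ) + (r' (n + i) : ℤ))) = 0}.Finite ∨
      {n : ℕ | (∑ i ∈ Finset.range (d + 1),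
        a i * ((r (n + i) : ℤ) + (r' (n + i) : ℤ))) ≠ 0}.Finite := by
  refine finite_setOf_eq_zero_or_finite_setOf_ne_zero ?_
  by_cases hroot' : ∑ i ∈ Finset.range (d + 1), (a i : ℝ) * θ' ^ i = 0
  · have hr'_zero := (hr'.satisfiesRecurrenceMinpoly h2
      (isAlgebraic_of_sum_mul_pow_eq_zero had hroot')).sum_mul_eq_zero hroot'
    simp only [mul_add, Finset.sum_add_distrib, hr'_zero, add_zero]
    exact hr.eventually_ne_zero_or_forall_eq_zero h1 had
  refine .inl ?_
  have hpos := hr.1.eventually_cast_pos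
  have hpos' := hr'.1.eventually_cast_pos
  have hreal : ∀ᶠ n in atTop,
      ∑ i ∈ Finset.range (d + 1), (a i : ℝ) * ((r (n + i) : ℝ) + r' (n + i)) ≠ 0 := by
    obtain rfl | hlt := hθθ'.eq_or_lt
    · refine eventually_ne_zero_of_tendsto_div hroot' (tendsto_sum_mul_div_of_tendsto_succ_div
        (u := fun n => (r n : ℝ) + r' n) ?_ (tendsto_add_succ_div_add hpos hpos' h1 h2) _ _)
      filter_upwards [hpos, hpos'] with n hn hn'
      exact (add_pos hn hn').ne'
    · have habs : |θ| < |θ'| := by rwa [abs_of_pos (by linarith), abs_of_pos (by linarith)]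
      exact eventually_ne_zero_of_tendsto_div hroot' (tendsto_sum_mul_add_div_of_abs_lt
        (hpos.mono fun _ => ne_of_gt) (hpos'.mono fun _ => ne_of_gt) h1 h2 habs _ _)
  filter_upwards [hreal] with n hn
  exact_mod_cast hn
end
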